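/- Let Ω ⊆ ℝ³ be open, let 0 < k̲ < k̄, let ε : Ω → ℝ, and let v : Ω × (k̲ − δ, k̄ + δ) → ℂ (for some δ > 0) be infinitely differentiable and satisfy Δₓv(x,k) + ∇ₓv(x,k)·∇ₓv(x,k) = −k² ε(x) for all x ∈ Ω and k ∈ [k̲, k̄]. Define q(x,k) = ∂ₖv(x,k) and V(x) = v(x, k̄). Then for all x ∈ Ω and k ∈ [k̲, k̄]: (k/2) Δₓq(x,k) + k ∇ₓq(x,k)·( −∫ₖ^{k̄} ∇ₓq(x,s) ds + ∇V(x) ) = −∫ₖ^{k̄} Δₓq(x,s) ds + ΔV(x) + ( −∫ₖ^{k̄} ∇ₓq(x,s) ds + ∇V(x) )·( −∫ₖ^{k̄} ∇ₓq(x,s) ds + ∇V(x) ), where the integrals in s are taken componentwise. -/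

import Mathlib

open scoped BigOperators

/-- Partial derivative in direction `i` of a complex-valued function on `ℝ³`. -/
noncomputable def pd (i : Fin 3) (f : (Fin 3 → ℝ) → ℂ) : (Fin 3 → ℝ) → ℂ :=
  fun x => fderiv ℝ f x (Pi.single i 1)

/-- Gradient of a complex-valued function on `ℝ³`. -/
noncomputable def grad3 (f : (Fin 3 → ℝ) → ℂ) (x : Fin 3 → ℝ) : Fin 3 → ℂ :=
  fun i => pd i f x

/-- Laplacian of a complex-valued function on `ℝ³`. -/
noncomputable def lap3 (f : (Fin 3 → ℝ) → ℂ) (x : Fin 3 → ℝ) : ℂ :=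
  ∑ i, pd i (pd i f) x

/-- Spatial partial derivative in direction `i` of a complex-valued function of `(x, k)`. -/
noncomputable def pdx (i : Fin 3) (f : (Fin 3 → ℝ) × ℝ → ℂ) : (Fin 3 → ℝ) × ℝ → ℂ :=
  fun p => fderiv ℝ f p (Pi.single i 1, 0)

/-- Partial derivative with respect to the wavenumber `k`. -/
noncomputable def pdk (f : (Fin 3 → ℝ) × ℝ → ℂ) : (Fin 3 → ℝ) × ℝ → ℂ :=
  fun p => fderiv ℝ f p (0, 1)

/-- Spatial gradient. -/
noncomputable def gradx (f : (Fin 3 → ℝ) × ℝ → ℂ) (p : (Fin 3 → ℝ) × ℝ) : Fin 3 → ℂ :=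
  fun i => pdx i f p

/-- Spatial Laplacian. -/
noncomputable def lapx (f : (Fin 3 → ℝ) × ℝ → ℂ) (p : (Fin 3 → ℝ) × ℝ) : ℂ :=
  ∑ i, pdx i (pdx i f) p

/-- Bilinear (non-conjugated) dot product on `ℂ³`. -/
noncomputable def cdot (a b : Fin 3 → ℂ) : ℂ := ∑ i, a i * b i

/-!
Differentiating the equation `Δₓv + ∇ₓv·∇ₓv = -k²ε` in `k` gives
`Δₓq + 2 ∇ₓq·∇ₓv = -2kε`; multiplied by `k/2` its right-hand side is again `-k²ε`, that is,
`Δₓv + ∇ₓv·∇ₓv`. The fundamental theorem of calculus in `k` rewrites `∇ₓv(x,k)` and `Δₓv(x,k)`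
as `-∫ₖ^{k̄} ∇ₓq ds + ∇V` and `-∫ₖ^{k̄} Δₓq ds + ΔV`, because spatial derivatives commute with
`∂ₖ` for smooth `v`.
-/

open Set

section Calculus

variable {F : Type*} [NormedAddCommGroup F] [NormedSpace ℝ F]

theorem HasDerivAt.eq_of_eqOn_Icc {φ ψ : ℝ → F} {φ' ψ' : F} {a b t : ℝ} (hab : a < b)
    (ht : t ∈ Icc a b) (hφψ : EqOn φ ψ (Icc a b)) (hφ : HasDerivAt φ φ' t)
    (hψ : HasDerivAt ψ ψ' t) : φ' = ψ' :=
  (uniqueDiffOn_Icc hab t ht).eq_deriv _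
    (hφ.hasDerivWithinAt.congr (fun _ hs => (hφψ hs).symm) (hφψ ht).symm) hψ.hasDerivWithinAt

theorem integral_comp_prodMk_right_eq_sub {E : Type*} [TopologicalSpace E] [CompleteSpace F]
    {g g' : E × ℝ → F} {U : Set (E × ℝ)} {x : E} {a b : ℝ} (hab : a ≤ b)
    (hseg : ∀ s ∈ Icc a b, (x, s) ∈ U) (hg' : ContinuousOn g' U)
    (hderiv : ∀ s ∈ Icc a b, HasDerivAt (fun t => g (x, t)) (g' (x, s)) s) :
    ∫ s in a..b, g' (x, s) = g (x, b) - g (x, a) := by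
  rw [← uIcc_of_le hab] at hseg hderiv
  exact intervalIntegral.integral_eq_sub_of_hasDerivAt hderiv
    ((hg'.comp (Continuous.prodMk_right x).continuousOn hseg).intervalIntegrable)

variable {E : Type*} [NormedAddCommGroup E] [NormedSpace ℝ E]

theorem ContDiffOn.fderiv_apply_of_isOpen {f : E → F} {U : Set E} {n : WithTop ℕ∞}
    (hf : ContDiffOn ℝ (n + 1) f U) (hU : IsOpen U) (w : E) :
    ContDiffOn ℝ n (fun p => fderiv ℝ f p w) U :=
  (hf.fderiv_of_isOpen hU le_rfl).clm_apply contDiffOn_const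

theorem fderiv_fderiv_apply_comm {f : E → F} {p : E} (hf : ContDiffAt ℝ 2 f p) (w w' : E) :
    fderiv ℝ (fun q => fderiv ℝ f q w) p w' = fderiv ℝ (fun q => fderiv ℝ f q w') p w := by
  have hd : DifferentiableAt ℝ (fderiv ℝ f) p :=
    (hf.fderiv_right (m := 1) le_rfl).differentiableAt one_ne_zero
  rw [fderiv_clm_apply hd (differentiableAt_const w),
    fderiv_clm_apply hd (differentiableAt_const w')]
  simpa using hf.isSymmSndFDerivAt (by simp) w' w

theorem DifferentiableAt.hasDerivAt_comp_prodMk_right {f : E × ℝ → F} {x : E} {t : ℝ}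
    (hf : DifferentiableAt ℝ f (x, t)) :
    HasDerivAt (fun s => f (x, s)) (fderiv ℝ f (x, t) (0, 1)) t :=
  hf.hasFDerivAt.comp_hasDerivAt t ((hasDerivAt_const t x).prodMk (hasDerivAt_id t))

theorem DifferentiableAt.fderiv_comp_prodMk_left {f : E × ℝ → F} {x : E} {c : ℝ}
    (hf : DifferentiableAt ℝ f (x, c)) (w : E) :
    fderiv ℝ (fun y => f (y, c)) x w = fderiv ℝ f (x, c) (w, 0) := by
  have hmk : HasFDerivAt (fun y : E => (y, c)) ((ContinuousLinearMap.id ℝ E).prod 0) x :=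
    (hasFDerivAt_id x).prodMk (hasFDerivAt_const c x)
  have hslice : HasFDerivAt (fun y => f (y, c)) _ x := hf.hasFDerivAt.comp x hmk
  simp [hslice.fderiv]

end Calculus

theorem hasDerivAt_cdot_self {a : ℝ → Fin 3 → ℂ} {a' : Fin 3 → ℂ} {t : ℝ}
    (ha : ∀ i, HasDerivAt (fun s => a s i) (a' i) t) :
    HasDerivAt (fun s => cdot (a s) (a s)) (2 * cdot a' (a t)) t :=
  (HasDerivAt.fun_sum fun i _ => (ha i).mul (ha i)).congr_deriv <| by
    rw [cdot, Finset.mul_sum]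
    exact Finset.sum_congr rfl fun i _ => by ring

section SpatialOperators

variable {U : Set ((Fin 3 → ℝ) × ℝ)} {f : (Fin 3 → ℝ) × ℝ → ℂ} {x : Fin 3 → ℝ}

theorem ContDiffOn.pdx (hf : ContDiffOn ℝ (⊤ : ℕ∞) f U) (hU : IsOpen U) (i : Fin 3) :
    ContDiffOn ℝ (⊤ : ℕ∞) (pdx i f) U :=
  ContDiffOn.fderiv_apply_of_isOpen (n := (⊤ : ℕ∞)) hf hU _

theorem ContDiffOn.pdk (hf : ContDiffOn ℝ (⊤ : ℕ∞) f U) (hU : IsOpen U) :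
    ContDiffOn ℝ (⊤ : ℕ∞) (pdk f) U :=
  ContDiffOn.fderiv_apply_of_isOpen (n := (⊤ : ℕ∞)) hf hU _

theorem ContDiffOn.lapx (hf : ContDiffOn ℝ (⊤ : ℕ∞) f U) (hU : IsOpen U) :
    ContDiffOn ℝ (⊤ : ℕ∞) (lapx f) U :=
  ContDiffOn.sum fun i _ => (hf.pdx hU i).pdx hU i

theorem pdx_pdk_eqOn (hf : ContDiffOn ℝ (⊤ : ℕ∞) f U) (hU : IsOpen U) (i : Fin 3) :
    EqOn (pdx i (pdk f)) (pdk (pdx i f)) U := fun _ hp =>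
  fderiv_fderiv_apply_comm
    ((hf.contDiffAt (hU.mem_nhds hp)).of_le (WithTop.coe_le_coe.mpr le_top)) _ _

theorem hasDerivAt_pdx_comp_prodMk_right (hf : ContDiffOn ℝ (⊤ : ℕ∞) f U) (hU : IsOpen U)
    {s : ℝ} (hs : (x, s) ∈ U) (i : Fin 3) :
    HasDerivAt (fun t => pdx i f (x, t)) (pdx i (pdk f) (x, s)) s := by
  rw [pdx_pdk_eqOn hf hU i hs]
  exact (((hf.pdx hU i).contDiffAt (hU.mem_nhds hs)).differentiableAt (by simp)
    ).hasDerivAt_comp_prodMk_right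

theorem hasDerivAt_lapx_comp_prodMk_right (hf : ContDiffOn ℝ (⊤ : ℕ∞) f U) (hU : IsOpen U)
    {s : ℝ} (hs : (x, s) ∈ U) :
    HasDerivAt (fun t => lapx f (x, t)) (lapx (pdk f) (x, s)) s := by
  refine HasDerivAt.fun_sum fun i _ => ?_
  have hcomm : pdx i (pdx i (pdk f)) (x, s) = pdx i (pdk (pdx i f)) (x, s) := by
    change fderiv ℝ (pdx i (pdk f)) (x, s) _ = fderiv ℝ (pdk (pdx i f)) (x, s) _
    rw [((pdx_pdk_eqOn hf hU i).eventuallyEq_of_mem (hU.mem_nhds hs)).fderiv_eq]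
  rw [hcomm]
  exact hasDerivAt_pdx_comp_prodMk_right (hf.pdx hU i) hU hs i

theorem pd_comp_prodMk_left {c : ℝ} (hf : DifferentiableAt ℝ f (x, c)) (i : Fin 3) :
    pd i (fun y => f (y, c)) x = pdx i f (x, c) :=
  hf.fderiv_comp_prodMk_left _

theorem lap3_comp_prodMk_left (hf : ContDiffOn ℝ (⊤ : ℕ∞) f U) (hU : IsOpen U) {c : ℝ}
    (hx : (x, c) ∈ U) : lap3 (fun y => f (y, c)) x = lapx f (x, c) := by
  have hnear : ∀ᶠ y in nhds x, (y, c) ∈ U :=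
    (Continuous.prodMk_left c).continuousAt.preimage_mem_nhds (hU.mem_nhds hx)
  have hsmooth (g : (Fin 3 → ℝ) × ℝ → ℂ) (hg : ContDiffOn ℝ (⊤ : ℕ∞) g U) :
      ∀ᶠ y in nhds x, DifferentiableAt ℝ g (y, c) :=
    hnear.mono fun y hy => (hg.contDiffAt (hU.mem_nhds hy)).differentiableAt (by simp)
  refine Finset.sum_congr rfl fun i _ => ?_
  have hslice : pd i (fun y => f (y, c)) =ᶠ[nhds x] fun y => pdx i f (y, c) :=
    (hsmooth f hf).mono fun y hy => pd_comp_prodMk_left hy i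
  change fderiv ℝ (pd i (fun y => f (y, c))) x _ = _
  rw [hslice.fderiv_eq]
  exact pd_comp_prodMk_left (hsmooth _ (hf.pdx hU i)).self_of_nhds i

theorem lapx_pdk_add_two_mul_cdot (hf : ContDiffOn ℝ (⊤ : ℕ∞) f U) (hU : IsOpen U)
    {a b k : ℝ} {e : ℂ} (hab : a < b) (hseg : ∀ s ∈ Icc a b, (x, s) ∈ U)
    (heq : ∀ s ∈ Icc a b,
      lapx f (x, s) + cdot (gradx f (x, s)) (gradx f (x, s)) = -((s : ℂ) ^ 2 * e))
    (hk : k ∈ Icc a b) :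
    lapx (pdk f) (x, k) + 2 * cdot (gradx (pdk f) (x, k)) (gradx f (x, k)) =
      -(2 * (k : ℂ) * e) := by
  have hlhs := (hasDerivAt_lapx_comp_prodMk_right hf hU (hseg k hk)).add
    (hasDerivAt_cdot_self fun i => hasDerivAt_pdx_comp_prodMk_right hf hU (hseg k hk) i)
  have hrhs : HasDerivAt (fun s : ℝ => -((s : ℂ) ^ 2 * e)) (-(2 * (k : ℂ) * e)) k := by
    simpa using (((hasDerivAt_id k).ofReal_comp.pow 2).mul_const e).fun_neg
  exact hlhs.eq_of_eqOn_Icc hab hk heq hrhs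

end SpatialOperators

theorem stmt2_general (Ω : Set (Fin 3 → ℝ)) (hΩ : IsOpen Ω) (kl ku δ : ℝ)
    (hk : kl < ku) (hδ : 0 < δ)
    (ε : (Fin 3 → ℝ) → ℝ) (v : (Fin 3 → ℝ) × ℝ → ℂ)
    (hv : ContDiffOn ℝ (⊤ : ℕ∞) v (Ω ×ˢ Set.Ioo (kl - δ) (ku + δ)))
    (heq : ∀ x ∈ Ω, ∀ k ∈ Set.Icc kl ku,
      lapx v (x, k) + cdot (gradx v (x, k)) (gradx v (x, k)) = -((k : ℂ) ^ 2 * (ε x : ℂ)))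
    (q : (Fin 3 → ℝ) × ℝ → ℂ) (hq : q = pdk v)
    (V : (Fin 3 → ℝ) → ℂ) (hV : ∀ x, V x = v (x, ku)) :
    ∀ x ∈ Ω, ∀ k ∈ Set.Icc kl ku,
      ((k : ℂ) / 2) * lapx q (x, k) +
          (k : ℂ) * cdot (gradx q (x, k))
            (fun i => -(∫ s in k..ku, pdx i q (x, s)) + grad3 V x i) =
        -(∫ s in k..ku, lapx q (x, s)) + lap3 V x +
          cdot (fun i => -(∫ s in k..ku, pdx i q (x, s)) + grad3 V x i)
            (fun i => -(∫ s in k..ku, pdx i q (x, s)) + grad3 V x i) := by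
  subst hq
  obtain rfl : V = fun y => v (y, ku) := funext hV
  intro x hx k hk'
  have hU : IsOpen (Ω ×ˢ Ioo (kl - δ) (ku + δ)) := hΩ.prod isOpen_Ioo
  have hseg : ∀ s ∈ Icc kl ku, (x, s) ∈ Ω ×ˢ Ioo (kl - δ) (ku + δ) := fun s hs =>
    ⟨hx, by linarith [hs.1], by linarith [hs.2]⟩
  have hseg' : ∀ s ∈ Icc k ku, (x, s) ∈ Ω ×ˢ Ioo (kl - δ) (ku + δ) := fun s hs =>
    hseg s ⟨hk'.1.trans hs.1, hs.2⟩
  have hku := hseg ku ⟨hk.le, le_rfl⟩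
  have hgrad : (fun i => -(∫ s in k..ku, pdx i (pdk v) (x, s)) + grad3 (fun y => v (y, ku)) x i)
      = gradx v (x, k) := by
    funext i
    rw [integral_comp_prodMk_right_eq_sub hk'.2 hseg' ((hv.pdk hU).pdx hU i).continuousOn
        fun s hs => hasDerivAt_pdx_comp_prodMk_right hv hU (hseg' s hs) i, grad3,
      pd_comp_prodMk_left ((hv.contDiffAt (hU.mem_nhds hku)).differentiableAt (by simp))]
    change _ = pdx i v (x, k)
    ring
  have hlap : -(∫ s in k..ku, lapx (pdk v) (x, s)) + lap3 (fun y => v (y, ku)) x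
      = lapx v (x, k) := by
    rw [integral_comp_prodMk_right_eq_sub hk'.2 hseg' ((hv.pdk hU).lapx hU).continuousOn
        fun s hs => hasDerivAt_lapx_comp_prodMk_right hv hU (hseg' s hs),
      lap3_comp_prodMk_left hv hU hku]
    ring
  rw [hgrad, hlap]
  linear_combination (k / 2 : ℂ) * lapx_pdk_add_two_mul_cdot hv hU hk hseg (heq x hx) hk'
    - heq x hx k hk'

/-- the integro-differential equation satisfied by `q = ∂ₖv` and the tail
`V = v(·, k̄)`. -/
theorem stmt2 (Ω : Set (Fin 3 → ℝ)) (hΩ : IsOpen Ω) (kl ku δ : ℝ)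
    (hkl : 0 < kl) (hk : kl < ku) (hδ : 0 < δ)
    (ε : (Fin 3 → ℝ) → ℝ) (v : (Fin 3 → ℝ) × ℝ → ℂ)
    (hv : ContDiffOn ℝ (⊤ : ℕ∞) v (Ω ×ˢ Set.Ioo (kl - δ) (ku + δ)))
    (heq : ∀ x ∈ Ω, ∀ k ∈ Set.Icc kl ku,
      lapx v (x, k) + cdot (gradx v (x, k)) (gradx v (x, k)) = -((k : ℂ) ^ 2 * (ε x : ℂ)))
    (q : (Fin 3 → ℝ) × ℝ → ℂ) (hq : q = pdk v)
    (V : (Fin 3 → ℝ) → ℂ) (hV : ∀ x, V x = v (x, ku)) :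
    ∀ x ∈ Ω, ∀ k ∈ Set.Icc kl ku,
      ((k : ℂ) / 2) * lapx q (x, k) +
          (k : ℂ) * cdot (gradx q (x, k))
            (fun i => -(∫ s in k..ku, pdx i q (x, s)) + grad3 V x i) =
        -(∫ s in k..ku, lapx q (x, s)) + lap3 V x +
          cdot (fun i => -(∫ s in k..ku, pdx i q (x, s)) + grad3 V x i)
            (fun i => -(∫ s in k..ku, pdx i q (x, s)) + grad3 V x i) :=
  stmt2_general Ω hΩ kl ku δ hk hδ ε v hv heq q hq V hV
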